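/- arXiv:2406.02203 — 3 statements merged into one kernel-verified Lean document; each statement's English description precedes it below -/
import Mathlib

section
/- Let R be a symmetric matrix partitioned in blocks as R = [[B, Cᵀ],[C, D]]. Then R is positive semidefinite if and only if (1) B is positive semidefinite, (2) the kernel of B is contained in the kernel of C, and (3) D − C B† Cᵀ is positive semidefinite, where B† is the Moore–Penrose pseudoinverse of B. -/
open Matrix

/-- The Moore–Penrose pseudoinverse of a symmetric real matrix is symmetric
(via uniqueness of the pseudoinverse). -/
private lemma pinv_symm {k : ℕ} {B Bd : Matrix (Fin k) (Fin k) ℝ}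
    (hB : Bᵀ = B)
    (hBd1 : B * Bd * B = B) (hBd2 : Bd * B * Bd = Bd)
    (hBd3 : (B * Bd)ᵀ = B * Bd) (hBd4 : (Bd * B)ᵀ = Bd * B) :
    Bdᵀ = Bd := by
  set Y := Bdᵀ with hYdef
  have hY1 : B * Y * B = B := by
    have := congrArg Matrix.transpose hBd1
    simpa [transpose_mul, hB, mul_assoc, hYdef] using this
  have hY2 : Y * B * Y = Y := by
    have := congrArg Matrix.transpose hBd2
    simpa [transpose_mul, hB, mul_assoc, hYdef] using this
  have hY3 : B * Y = Bd * B := by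
    calc B * Y = Bᵀ * Bdᵀ := by rw [hB]
    _ = (Bd * B)ᵀ := by rw [transpose_mul]
    _ = Bd * B := hBd4
  have hYB : Y * B = B * Bd := by
    calc Y * B = Bdᵀ * Bᵀ := by rw [hB]
    _ = (B * Bd)ᵀ := by rw [transpose_mul]
    _ = B * Bd := hBd3
  have hBYs : (B * Y)ᵀ = B * Y := by rw [hY3]; exact hBd4
  have e1 : B * Bd = B * Y := by
    calc B * Bd = (B * Bd)ᵀ := hBd3.symm
    _ = Bdᵀ * Bᵀ := by rw [transpose_mul]
    _ = Bdᵀ * (B * Y * B)ᵀ := by rw [hY1, hB]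
    _ = Bdᵀ * (Bᵀ * (B * Y)ᵀ) := by rw [transpose_mul]
    _ = (Bdᵀ * Bᵀ) * (B * Y)ᵀ := by rw [mul_assoc]
    _ = (B * Bd)ᵀ * (B * Y)ᵀ := by rw [← transpose_mul]
    _ = (B * Bd) * (B * Y) := by rw [hBd3, hBYs]
    _ = (B * Bd * B) * Y := by simp only [mul_assoc]
    _ = B * Y := by rw [hBd1]
  have comm : B * Bd = Bd * B := by rw [e1, hY3]
  calc Y = Y * B * Y := hY2.symm
  _ = (B * Bd) * Y := by rw [hYB]
  _ = (Bd * B) * Y := by rw [comm]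
  _ = Bd * (B * Y) := by rw [mul_assoc]
  _ = Bd * (Bd * B) := by rw [hY3]
  _ = Bd * (B * Bd) := by rw [comm]
  _ = Bd * B * Bd := by rw [mul_assoc]
  _ = Bd := hBd2

private lemma dpt {m n : ℕ} (M : Matrix (Fin m) (Fin n) ℝ) (v : Fin n → ℝ)
    (w : Fin m → ℝ) : (M *ᵥ v) ⬝ᵥ w = v ⬝ᵥ (Mᵀ *ᵥ w) := by
  rw [dotProduct_mulVec, vecMul_transpose, dotProduct_comm]

/-- Quadratic form of a block matrix. -/
private lemma quad {k l : ℕ} (B : Matrix (Fin k) (Fin k) ℝ)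
    (C : Matrix (Fin l) (Fin k) ℝ) (D : Matrix (Fin l) (Fin l) ℝ)
    (x : Fin k → ℝ) (y : Fin l → ℝ) :
    (Sum.elim x y) ⬝ᵥ ((Matrix.fromBlocks B Cᵀ C D) *ᵥ Sum.elim x y)
      = x ⬝ᵥ (B *ᵥ x) + 2 * (y ⬝ᵥ (C *ᵥ x)) + y ⬝ᵥ (D *ᵥ y) := by
  rw [fromBlocks_mulVec, sumElim_dotProduct_sumElim]
  simp only [Sum.elim_comp_inl, Sum.elim_comp_inr, dotProduct_add]
  have h : x ⬝ᵥ (Cᵀ *ᵥ y) = y ⬝ᵥ (C *ᵥ x) := by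
    rw [← dpt C x y, dotProduct_comm]
  rw [h]; ring

/-- Albert's characterization of PSD block matrices.
`Bd` is the Moore–Penrose pseudoinverse of `B`, characterized by the four Penrose
conditions. -/
theorem psd_block_characterization {k l : ℕ}
    (B : Matrix (Fin k) (Fin k) ℝ) (C : Matrix (Fin l) (Fin k) ℝ)
    (D : Matrix (Fin l) (Fin l) ℝ) (Bd : Matrix (Fin k) (Fin k) ℝ)
    (hB : Bᵀ = B) (hD : Dᵀ = D)
    (hBd1 : B * Bd * B = B) (hBd2 : Bd * B * Bd = Bd)
    (hBd3 : (B * Bd)ᵀ = B * Bd) (hBd4 : (Bd * B)ᵀ = Bd * B) :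
    (Matrix.fromBlocks B Cᵀ C D).PosSemidef ↔
      B.PosSemidef ∧ (∀ x : Fin k → ℝ, B.mulVec x = 0 → C.mulVec x = 0) ∧
        (D - C * Bd * Cᵀ).PosSemidef := by
  have hBds : Bdᵀ = Bd := pinv_symm hB hBd1 hBd2 hBd3 hBd4
  have hBH : B.IsHermitian := by
    rw [Matrix.IsHermitian, conjTranspose_eq_transpose_of_trivial, hB]
  have hSsym : (D - C * Bd * Cᵀ)ᵀ = D - C * Bd * Cᵀ := by
    rw [transpose_sub, hD, transpose_mul, transpose_mul, transpose_transpose, hBds,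
      ← Matrix.mul_assoc]
  have hSH : (D - C * Bd * Cᵀ).IsHermitian := by
    rw [Matrix.IsHermitian, conjTranspose_eq_transpose_of_trivial, hSsym]
  -- the key matrix identity: (Bd * Cᵀ)ᵀ * (B * (Bd * Cᵀ)) = C * Bd * Cᵀ
  have key : (Bd * Cᵀ)ᵀ * (B * (Bd * Cᵀ)) = C * Bd * Cᵀ := by
    rw [transpose_mul, transpose_transpose, hBds, ← Matrix.mul_assoc, ← Matrix.mul_assoc,
      Matrix.mul_assoc C Bd B, Matrix.mul_assoc C (Bd * B) Bd, hBd2]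
  constructor
  · rw [posSemidef_iff_dotProduct_mulVec]
    rintro ⟨hRH, hR⟩
    have hq : ∀ (x : Fin k → ℝ) (y : Fin l → ℝ),
        0 ≤ x ⬝ᵥ (B *ᵥ x) + 2 * (y ⬝ᵥ (C *ᵥ x)) + y ⬝ᵥ (D *ᵥ y) := by
      intro x y
      have := hR (Sum.elim x y)
      rwa [star_trivial, quad] at this
    have hBpsd : B.PosSemidef := by
      refine posSemidef_iff_dotProduct_mulVec.mpr ⟨hBH, fun x => ?_⟩
      have := hq x 0
      simpa [star_trivial] using this
    have hker : ∀ x : Fin k → ℝ, B.mulVec x = 0 → C.mulVec x = 0 := by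
      intro x hx
      have h0 : ∀ t : ℝ, ∀ y : Fin l → ℝ,
          0 ≤ 2 * (t * (y ⬝ᵥ (C *ᵥ x))) + y ⬝ᵥ (D *ᵥ y) := by
        intro t y
        have h := hq (t • x) y
        rw [mulVec_smul, hx, smul_zero, dotProduct_zero] at h
        rw [mulVec_smul, dotProduct_smul, smul_eq_mul] at h
        linarith
      have ha : 0 ≤ (C *ᵥ x) ⬝ᵥ (C *ᵥ x) :=
        Finset.sum_nonneg fun i _ => mul_self_nonneg _
      refine dotProduct_self_eq_zero.mp ?_
      by_contra hne
      have hpos : 0 < (C *ᵥ x) ⬝ᵥ (C *ᵥ x) := lt_of_le_of_ne ha (Ne.symm hne)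
      have key2 := fun t : ℝ => h0 t (C *ᵥ x)
      set a := (C *ᵥ x) ⬝ᵥ (C *ᵥ x) with hadef
      set b := (C *ᵥ x) ⬝ᵥ (D *ᵥ (C *ᵥ x)) with hbdef
      have h3 := key2 (-(b + 1) / (2 * a))
      have h2 : 2 * (-(b + 1) / (2 * a) * a) + b = -1 := by
        field_simp
        ring
      linarith
    refine ⟨hBpsd, hker, posSemidef_iff_dotProduct_mulVec.mpr ⟨hSH, fun y => ?_⟩⟩
    rw [star_trivial]
    set x : Fin k → ℝ := -((Bd * Cᵀ) *ᵥ y) with hx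
    have h1 : x ⬝ᵥ (B *ᵥ x) = y ⬝ᵥ ((C * Bd * Cᵀ) *ᵥ y) := by
      rw [hx, mulVec_neg, dotProduct_neg, neg_dotProduct, neg_neg, mulVec_mulVec,
        dpt, mulVec_mulVec, key]
    have h2 : y ⬝ᵥ (C *ᵥ x) = -(y ⬝ᵥ ((C * Bd * Cᵀ) *ᵥ y)) := by
      rw [hx, mulVec_neg, dotProduct_neg, mulVec_mulVec, ← Matrix.mul_assoc]
    have hqx := hq x y
    rw [h1, h2] at hqx
    rw [sub_mulVec, dotProduct_sub]
    linarith
  · simp only [posSemidef_iff_dotProduct_mulVec]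
    rintro ⟨⟨_, hBpos⟩, hker, _, hSpos⟩
    constructor
    · rw [Matrix.IsHermitian, conjTranspose_eq_transpose_of_trivial,
        fromBlocks_transpose, hB, hD, transpose_transpose]
    · intro z
      rw [star_trivial, ← Sum.elim_comp_inl_inr z]
      set x : Fin k → ℝ := z ∘ Sum.inl with hxdef
      set y : Fin l → ℝ := z ∘ Sum.inr with hydef
      rw [quad]
      -- kernel fact: C *ᵥ w = (C * (Bd * B)) *ᵥ w for all w
      have hCx : ∀ w : Fin k → ℝ, C *ᵥ w = (C * (Bd * B)) *ᵥ w := by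
        intro w
        have hBw : B *ᵥ (w - (Bd * B) *ᵥ w) = 0 := by
          rw [mulVec_sub, mulVec_mulVec, ← Matrix.mul_assoc, hBd1, sub_self]
        have := hker _ hBw
        rw [mulVec_sub, mulVec_mulVec, sub_eq_zero] at this
        exact this
      set u : Fin k → ℝ := x + (Bd * Cᵀ) *ᵥ y with hu
      have hBu : 0 ≤ u ⬝ᵥ (B *ᵥ u) := by simpa [star_trivial] using hBpos u
      have hSy : 0 ≤ y ⬝ᵥ (D *ᵥ y) - y ⬝ᵥ ((C * Bd * Cᵀ) *ᵥ y) := by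
        have := hSpos y
        rw [star_trivial, sub_mulVec, dotProduct_sub] at this
        exact this
      have cross : ((Bd * Cᵀ) *ᵥ y) ⬝ᵥ (B *ᵥ x) = y ⬝ᵥ (C *ᵥ x) := by
        rw [dpt, mulVec_mulVec, transpose_mul, transpose_transpose, hBds,
          Matrix.mul_assoc, ← hCx x]
      have cross2 : x ⬝ᵥ (B *ᵥ ((Bd * Cᵀ) *ᵥ y)) = y ⬝ᵥ (C *ᵥ x) := by
        rw [dotProduct_comm, dpt, hB]
        exact cross
      have sq : ((Bd * Cᵀ) *ᵥ y) ⬝ᵥ (B *ᵥ ((Bd * Cᵀ) *ᵥ y))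
          = y ⬝ᵥ ((C * Bd * Cᵀ) *ᵥ y) := by
        rw [mulVec_mulVec, dpt, mulVec_mulVec, key]
      have expand : u ⬝ᵥ (B *ᵥ u)
          = x ⬝ᵥ (B *ᵥ x) + 2 * (y ⬝ᵥ (C *ᵥ x)) + y ⬝ᵥ ((C * Bd * Cᵀ) *ᵥ y) := by
        rw [hu, mulVec_add, dotProduct_add, add_dotProduct, add_dotProduct,
          cross, cross2, sq]
        ring
      linarith [hBu, hSy, expand]
end

section
/- Let X = U Σ Vᵀ be a singular value decomposition of X ∈ ℝ^{n×m} with U = (U₁ U₂), V = (V₁ V₂), and Σ₁ ∈ ℝ^{r×r} the invertible diagonal block of singular values where r = rank(X). Then for every A ∈ ℝ^{n×n}, writing = UᵀAU with blocks Â₁₁ ∈ ℝ^{r×r}, Â₂₁ ∈ ℝ^{(n−r)×r}, one has ‖AX − B‖_F² = ‖Â₁₁Σ₁ − U₁ᵀBV₁‖_F² + ‖Â₂₁Σ₁ − U₂ᵀBV₁‖_F² + ‖BV₂‖_F². -/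
open Matrix

/-- Squared Frobenius norm. -/
noncomputable def frobSq {m n : Type*} [Fintype m] [Fintype n] (A : Matrix m n ℝ) : ℝ :=
  ∑ i, ∑ j, (A i j) ^ 2

lemma frobSq_eq_trace {m n : Type*} [Fintype m] [Fintype n] (A : Matrix m n ℝ) :
    frobSq A = (Aᵀ * A).trace := by
  simp only [frobSq, Matrix.trace, Matrix.diag, Matrix.mul_apply, Matrix.transpose_apply]
  rw [Finset.sum_comm]
  exact Finset.sum_congr rfl fun i _ => Finset.sum_congr rfl fun j _ => sq (A j i)

lemma frobSq_transpose {m n : Type*} [Fintype m] [Fintype n] (A : Matrix m n ℝ) :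
    frobSq Aᵀ = frobSq A := by
  simp only [frobSq, Matrix.transpose_apply]
  exact Finset.sum_comm

lemma frobSq_neg {m n : Type*} [Fintype m] [Fintype n] (A : Matrix m n ℝ) :
    frobSq (-A) = frobSq A := by
  simp [frobSq]

lemma frobSq_split_right {n m r q : Type*} [Fintype n] [Fintype m] [Fintype r] [Fintype q]
    [DecidableEq m]
    (M : Matrix n m ℝ) (V₁ : Matrix m r ℝ) (V₂ : Matrix m q ℝ)
    (hVfull : V₁ * V₁ᵀ + V₂ * V₂ᵀ = 1) :
    frobSq M = frobSq (M * V₁) + frobSq (M * V₂) := by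
  rw [frobSq_eq_trace, frobSq_eq_trace, frobSq_eq_trace]
  have h1 : ((M * V₁)ᵀ * (M * V₁)).trace = (Mᵀ * M * (V₁ * V₁ᵀ)).trace := by
    rw [Matrix.transpose_mul, Matrix.mul_assoc, Matrix.trace_mul_comm]
    simp only [Matrix.mul_assoc]
  have h2 : ((M * V₂)ᵀ * (M * V₂)).trace = (Mᵀ * M * (V₂ * V₂ᵀ)).trace := by
    rw [Matrix.transpose_mul, Matrix.mul_assoc, Matrix.trace_mul_comm]
    simp only [Matrix.mul_assoc]
  rw [h1, h2, ← Matrix.trace_add, ← Matrix.mul_add, hVfull, Matrix.mul_one]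

lemma frobSq_split_left {n r p s : Type*} [Fintype n] [Fintype r] [Fintype p] [Fintype s]
    [DecidableEq n]
    (N : Matrix n s ℝ) (U₁ : Matrix n r ℝ) (U₂ : Matrix n p ℝ)
    (hUfull : U₁ * U₁ᵀ + U₂ * U₂ᵀ = 1) :
    frobSq N = frobSq (U₁ᵀ * N) + frobSq (U₂ᵀ * N) := by
  have h := frobSq_split_right Nᵀ U₁ U₂ hUfull
  have e1 : Nᵀ * U₁ = (U₁ᵀ * N)ᵀ := by simp [Matrix.transpose_mul]
  have e2 : Nᵀ * U₂ = (U₂ᵀ * N)ᵀ := by simp [Matrix.transpose_mul]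
  rw [e1, e2, frobSq_transpose, frobSq_transpose, frobSq_transpose] at h
  exact h

/-- decomposition of the objective via the SVD of `X`.
Here `p = n − r` and `q = m − r`. -/
theorem objective_svd_decomposition {n m r p q : ℕ}
    (X B : Matrix (Fin n) (Fin m) ℝ)
    (U₁ : Matrix (Fin n) (Fin r) ℝ) (U₂ : Matrix (Fin n) (Fin p) ℝ)
    (V₁ : Matrix (Fin m) (Fin r) ℝ) (V₂ : Matrix (Fin m) (Fin q) ℝ)
    (S1 : Matrix (Fin r) (Fin r) ℝ)
    (hU1 : U₁ᵀ * U₁ = 1) (hU2 : U₂ᵀ * U₂ = 1) (hU12 : U₁ᵀ * U₂ = 0)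
    (hUfull : U₁ * U₁ᵀ + U₂ * U₂ᵀ = 1)
    (hV1 : V₁ᵀ * V₁ = 1) (hV2 : V₂ᵀ * V₂ = 1) (hV12 : V₁ᵀ * V₂ = 0)
    (hVfull : V₁ * V₁ᵀ + V₂ * V₂ᵀ = 1)
    (hSVD : X = U₁ * S1 * V₁ᵀ) :
    ∀ A : Matrix (Fin n) (Fin n) ℝ,
      frobSq (A * X - B) =
        frobSq ((U₁ᵀ * A * U₁) * S1 - U₁ᵀ * B * V₁)
          + frobSq ((U₂ᵀ * A * U₁) * S1 - U₂ᵀ * B * V₁)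
          + frobSq (B * V₂) := by
  intro A
  have step1 := frobSq_split_right (A * X - B) V₁ V₂ hVfull
  have hMV1 : (A * X - B) * V₁ = A * U₁ * S1 - B * V₁ := by
    rw [hSVD, Matrix.sub_mul]
    simp only [Matrix.mul_assoc, hV1, Matrix.mul_one]
  have hMV2 : (A * X - B) * V₂ = -(B * V₂) := by
    rw [hSVD, Matrix.sub_mul]
    simp only [Matrix.mul_assoc, hV12, Matrix.mul_zero, zero_sub]
  rw [hMV1, hMV2, frobSq_neg] at step1
  have step2 := frobSq_split_left (A * U₁ * S1 - B * V₁) U₁ U₂ hUfull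
  have e1 : U₁ᵀ * (A * U₁ * S1 - B * V₁) = (U₁ᵀ * A * U₁) * S1 - U₁ᵀ * B * V₁ := by
    rw [Matrix.mul_sub]; simp only [Matrix.mul_assoc]
  have e2 : U₂ᵀ * (A * U₁ * S1 - B * V₁) = (U₂ᵀ * A * U₁) * S1 - U₂ᵀ * B * V₁ := by
    rw [Matrix.mul_sub]; simp only [Matrix.mul_assoc]
  rw [e1, e2] at step2
  rw [step1, step2]
end

section
/- Let Λ ∈ ℝ^{s×s} be diagonal positive definite, W₁ ∈ ℝ^{r×s} with orthonormal columns, and Y ∈ ℝ^{(n−r)×s}. Then the symmetric matrix H = [[W₁ΛW₁ᵀ, (1/2)(YW₁ᵀ)ᵀ],[(1/2)YW₁ᵀ, (1/4)YΛ⁻¹Yᵀ]] is positive semidefinite and has rank exactly s, equal to the rank of the 2s×2s matrix [[Λ, I],[I, Λ⁻¹]]. -/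
open Matrix

/-- the symmetric block matrix
`H = [[W₁ΛW₁ᵀ, (1/2)(YW₁ᵀ)ᵀ],[(1/2)YW₁ᵀ, (1/4)YΛ⁻¹Yᵀ]]` is PSD and has rank `s`,
equal to the rank of `[[Λ, I],[I, Λ⁻¹]]`. Here `p = n − r`, `Λ = diagonal d`. -/
theorem block_symmetric_part_psd_rank {r s p : ℕ}
    (W₁ : Matrix (Fin r) (Fin s) ℝ) (hW1 : W₁ᵀ * W₁ = 1)
    (d : Fin s → ℝ) (hd : ∀ i, 0 < d i)
    (Y : Matrix (Fin p) (Fin s) ℝ) :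
    let Λ := Matrix.diagonal d
    let H : Matrix (Fin r ⊕ Fin p) (Fin r ⊕ Fin p) ℝ :=
      Matrix.fromBlocks (W₁ * Λ * W₁ᵀ) ((1 / 2 : ℝ) • (Y * W₁ᵀ))ᵀ
        ((1 / 2 : ℝ) • (Y * W₁ᵀ)) ((1 / 4 : ℝ) • (Y * Λ⁻¹ * Yᵀ))
    H.PosSemidef ∧ H.rank = s ∧
      (Matrix.fromBlocks Λ (1 : Matrix (Fin s) (Fin s) ℝ) 1 Λ⁻¹).rank = s := by
  intro Λ H
  have hdne : ∀ i, d i ≠ 0 := fun i => (hd i).ne'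
  set e : Fin s → ℝ := fun i => Real.sqrt (d i) with he
  have hee : ∀ i, e i * e i = d i := fun i => Real.mul_self_sqrt (hd i).le
  have hene : ∀ i, e i ≠ 0 := fun i => by
    simpa [he] using (Real.sqrt_pos.mpr (hd i)).ne'
  have hΛinv : Λ⁻¹ = Matrix.diagonal (fun i => (d i)⁻¹) :=
    Matrix.inv_eq_right_inv (by
      rw [Matrix.diagonal_mul_diagonal,
        show (fun i => d i * (d i)⁻¹) = fun _ => (1 : ℝ) from
          funext fun i => mul_inv_cancel₀ (hdne i), Matrix.diagonal_one])
  have hdiag_e : Matrix.diagonal e * Matrix.diagonal e = Λ := by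
    rw [Matrix.diagonal_mul_diagonal]
    exact congrArg _ (funext hee)
  have hdiag_ei : Matrix.diagonal e * Matrix.diagonal (fun i => (e i)⁻¹) = 1 := by
    rw [Matrix.diagonal_mul_diagonal,
      show (fun i => e i * (e i)⁻¹) = fun _ => (1 : ℝ) from
        funext fun i => mul_inv_cancel₀ (hene i), Matrix.diagonal_one]
  have hdiag_ie : Matrix.diagonal (fun i => (e i)⁻¹) * Matrix.diagonal e = 1 := by
    rw [Matrix.diagonal_mul_diagonal,
      show (fun i => (e i)⁻¹ * e i) = fun _ => (1 : ℝ) from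
        funext fun i => inv_mul_cancel₀ (hene i), Matrix.diagonal_one]
  have hdiag_ii :
      Matrix.diagonal (fun i => (e i)⁻¹) * Matrix.diagonal (fun i => (e i)⁻¹) = Λ⁻¹ := by
    rw [Matrix.diagonal_mul_diagonal, hΛinv]
    exact congrArg _ (funext fun i => by rw [← hee i, mul_inv])
  set N : Matrix (Fin p) (Fin s) ℝ :=
    (1 / 2 : ℝ) • (Y * Matrix.diagonal (fun i => (e i)⁻¹)) with hN
  set A : Matrix (Fin r ⊕ Fin p) (Fin s) ℝ :=
    Matrix.fromRows (W₁ * Matrix.diagonal e) N with hA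
  have hB11 : (W₁ * Matrix.diagonal e) * (W₁ * Matrix.diagonal e)ᵀ = W₁ * Λ * W₁ᵀ := by
    rw [Matrix.transpose_mul, Matrix.diagonal_transpose, ← Matrix.mul_assoc,
      Matrix.mul_assoc W₁ (Matrix.diagonal e) (Matrix.diagonal e), hdiag_e]
  have hB12 : (W₁ * Matrix.diagonal e) * Nᵀ = ((1 / 2 : ℝ) • (Y * W₁ᵀ))ᵀ := by
    rw [hN]
    simp only [Matrix.transpose_smul, Matrix.transpose_mul, Matrix.transpose_transpose,
      Matrix.diagonal_transpose, Matrix.mul_smul]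
    rw [Matrix.mul_assoc W₁, ← Matrix.mul_assoc (Matrix.diagonal e), hdiag_ei,
      Matrix.one_mul]
  have hB21 : N * (W₁ * Matrix.diagonal e)ᵀ = (1 / 2 : ℝ) • (Y * W₁ᵀ) := by
    rw [hN]
    simp only [Matrix.transpose_mul, Matrix.diagonal_transpose, Matrix.smul_mul]
    rw [Matrix.mul_assoc Y, ← Matrix.mul_assoc (Matrix.diagonal _), hdiag_ie,
      Matrix.one_mul]
  have hB22 : N * Nᵀ = (1 / 4 : ℝ) • (Y * Λ⁻¹ * Yᵀ) := by
    rw [hN]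
    simp only [Matrix.transpose_smul, Matrix.transpose_mul, Matrix.diagonal_transpose,
      Matrix.smul_mul, Matrix.mul_smul, smul_smul]
    norm_num
    rw [Matrix.mul_assoc Y, ← Matrix.mul_assoc (Matrix.diagonal _), hdiag_ii,
      ← Matrix.mul_assoc]
  have hH : H = A * Aᵀ := by
    rw [hA, Matrix.transpose_fromRows, Matrix.fromRows_mul_fromCols,
      hB11, hB12, hB21, hB22]
  have hAT : Aᴴ = Aᵀ := by ext i j; simp
  have hAtA : Aᵀ * A = Λ + Nᵀ * N := by
    rw [hA, Matrix.transpose_fromRows, Matrix.fromCols_mul_fromRows]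
    congr 1
    rw [Matrix.transpose_mul, Matrix.diagonal_transpose, Matrix.mul_assoc,
      ← Matrix.mul_assoc W₁ᵀ, hW1, Matrix.one_mul, hdiag_e]
  have hPD : (Aᵀ * A).PosDef := by
    rw [hAtA]
    exact (Matrix.posDef_diagonal_iff.mpr hd).add_posSemidef
      (by simpa [hAT] using Matrix.posSemidef_conjTranspose_mul_self N)
  have hrankA : (Aᵀ * A).rank = s := by
    rw [Matrix.rank_of_isUnit _ hPD.isUnit, Fintype.card_fin]
  refine ⟨?_, ?_, ?_⟩
  · rw [hH]
    simpa [hAT] using Matrix.posSemidef_self_mul_conjTranspose A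
  · rw [hH, Matrix.rank_self_mul_transpose, ← Matrix.rank_transpose_mul_self, hrankA]
  · set C : Matrix (Fin s ⊕ Fin s) (Fin s) ℝ :=
      Matrix.fromRows (Matrix.diagonal e) (Matrix.diagonal (fun i => (e i)⁻¹)) with hC
    have hBfac : Matrix.fromBlocks Λ (1 : Matrix (Fin s) (Fin s) ℝ) 1 Λ⁻¹ = C * Cᵀ := by
      rw [hC, Matrix.transpose_fromRows, Matrix.fromRows_mul_fromCols,
        Matrix.diagonal_transpose, Matrix.diagonal_transpose, hdiag_e, hdiag_ei,
        hdiag_ie, hdiag_ii]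
    have hCtC : Cᵀ * C = Λ + Λ⁻¹ := by
      rw [hC, Matrix.transpose_fromRows, Matrix.fromCols_mul_fromRows,
        Matrix.diagonal_transpose, Matrix.diagonal_transpose, hdiag_e, hdiag_ii]
    have hPDC : (Cᵀ * C).PosDef := by
      rw [hCtC, hΛinv]
      exact (Matrix.posDef_diagonal_iff.mpr hd).add_posSemidef
        (Matrix.posDef_diagonal_iff.mpr (fun i => inv_pos.mpr (hd i))).posSemidef
    rw [hBfac, Matrix.rank_self_mul_transpose, ← Matrix.rank_transpose_mul_self,
      Matrix.rank_of_isUnit _ hPDC.isUnit, Fintype.card_fin]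
end
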